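/- If A and B are d×d matrices, then with c₁ = -1/3, c₂ = 4/3 and S(h) = e^{(h/2)B}e^{hA}e^{(h/2)B}, the combination c₁S(h) + c₂S(h/2)² satisfies c₁S(h) + c₂S(h/2)² = e^{h(A+B)} + O(h⁵). -/

import Mathlib

attribute [local instance] Matrix.linftyOpNormedRing Matrix.linftyOpNormedAlgebra

open NormedSpace

/-!
Replace every exponential factor by its Taylor polynomial of degree four,
`exp (t • M) = ∑_{k<5} (t^k / k!) • M^k + O(t⁵)`. Since sums and products of such approximations
(of bounded functions) stay accurate to `O(t⁵)`, the MPE combination minus `exp (h • (A + B))`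
agrees up to `O(h⁵)` with the same expression in the Taylor polynomials. That expression is a
polynomial in `h` with noncommuting coefficients, and expanding it shows that its coefficients of
degree `< 5` vanish (the symmetric Strang splitting has no `h⁴` error term, and the extrapolation
cancels its `h³` term). Hence it is `h⁵` times a polynomial.
-/

open Polynomial Asymptotics Filter Topology
open scoped Nat

theorem isBigO_mul_sub_mul {α R : Type*} [SeminormedRing R] {l : Filter α} {f₁ f₂ g₁ g₂ : α → R}
    {u : α → ℝ} (h₁ : (fun x => f₁ x - g₁ x) =O[l] u) (h₂ : (fun x => f₂ x - g₂ x) =O[l] u)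
    (hf₁ : f₁ =O[l] (fun _ => (1 : ℝ))) (hg₂ : g₂ =O[l] (fun _ => (1 : ℝ))) :
    (fun x => f₁ x * f₂ x - g₁ x * g₂ x) =O[l] u := by
  have h₁₂ : (fun x => f₁ x * (f₂ x - g₂ x)) =O[l] u := by simpa only [one_mul] using hf₁.mul h₂
  have h₂₁ : (fun x => (f₁ x - g₁ x) * g₂ x) =O[l] u := by simpa only [mul_one] using h₁.mul hg₂
  exact (h₁₂.add h₂₁).congr_left fun x => by noncomm_ring

variable {𝔸 : Type*}

section Algebraic

variable [Ring 𝔸] [Algebra ℝ 𝔸]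

noncomputable def expTaylor (n : ℕ) (M : 𝔸) : 𝔸[X] :=
  ∑ k ∈ Finset.range n, C ((k ! : ℝ)⁻¹ • M ^ k) * X ^ k

noncomputable def strangTaylor (n : ℕ) (A B : 𝔸) : 𝔸[X] :=
  expTaylor n ((1 / 2 : ℝ) • B) * expTaylor n A * expTaylor n ((1 / 2 : ℝ) • B)

noncomputable def mpe4TaylorDefect (A B : 𝔸) : 𝔸[X] :=
  (-1 / 3 : ℝ) • strangTaylor 5 A B
    + (4 / 3 : ℝ) • strangTaylor 5 ((1 / 2 : ℝ) • A) ((1 / 2 : ℝ) • B) ^ 2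
    - expTaylor 5 (A + B)

theorem coeff_expTaylor (n : ℕ) (M : 𝔸) (k : ℕ) :
    (expTaylor n M).coeff k = if k < n then (k ! : ℝ)⁻¹ • M ^ k else 0 := by
  simp [expTaylor, coeff_C_mul, coeff_X_pow]

theorem coeff_mpe4TaylorDefect (A B : 𝔸) {k : ℕ} (hk : k < 5) :
    (mpe4TaylorDefect A B).coeff k = 0 := by
  interval_cases k <;>
  · simp only [mpe4TaylorDefect, strangTaylor, sq, coeff_sub, coeff_add, coeff_smul, coeff_mul,
      Finset.Nat.sum_antidiagonal_eq_sum_range_succ_mk, Finset.sum_range_succ,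
      Finset.sum_range_zero, coeff_expTaylor]
    norm_num [Nat.factorial, smul_mul_assoc, mul_smul_comm, smul_smul, pow_succ, mul_add, add_mul,
      mul_assoc]
    match_scalars <;> ring

/-- Evaluation at the central element `algebraMap ℝ 𝔸 t`, which is multiplicative although `𝔸`
is not commutative. -/
noncomputable def evalScalar (t : ℝ) : 𝔸[X] →ₐ[ℝ] 𝔸 :=
  eval₂AlgHom (AlgHom.id ℝ 𝔸) (algebraMap ℝ 𝔸 t) fun a => Algebra.commute_algebraMap_right t a

theorem evalScalar_C (t : ℝ) (a : 𝔸) : evalScalar t (C a) = a := eval₂_C _ _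

theorem evalScalar_X (t : ℝ) : evalScalar t (X : 𝔸[X]) = algebraMap ℝ 𝔸 t := eval₂_X _ _

theorem evalScalar_X_pow_mul (t : ℝ) (n : ℕ) (p : 𝔸[X]) :
    evalScalar t (X ^ n * p) = t ^ n • evalScalar t p := by
  rw [map_mul, map_pow, evalScalar_X, ← map_pow, ← Algebra.smul_def]

theorem continuous_evalScalar [TopologicalSpace 𝔸] [IsTopologicalRing 𝔸] [ContinuousSMul ℝ 𝔸]
    (p : 𝔸[X]) : Continuous fun t : ℝ => evalScalar t p :=
  (p.continuous_eval₂ _).comp (continuous_algebraMap ℝ 𝔸)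

end Algebraic

section Normed

variable [NormedRing 𝔸] [NormedAlgebra ℝ 𝔸]

theorem evalScalar_expTaylor (t : ℝ) (n : ℕ) (M : 𝔸) :
    evalScalar t (expTaylor n M) = (expSeries ℝ 𝔸).partialSum n (t • M) := by
  simp only [expTaylor, map_sum, map_mul, map_pow, evalScalar_C, evalScalar_X,
    FormalMultilinearSeries.partialSum, expSeries_apply_eq]
  refine Finset.sum_congr rfl fun k _ => ?_
  rw [← map_pow, ← Algebra.commutes, ← Algebra.smul_def, _root_.smul_pow, smul_comm]

theorem isBigO_evalScalar_of_X_pow_dvd {n : ℕ} {p : 𝔸[X]} (hp : X ^ n ∣ p) :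
    (fun t : ℝ => evalScalar t p) =O[𝓝 0] (· ^ n) := by
  obtain ⟨q, rfl⟩ := hp
  have := (isBigO_refl (· ^ n) (𝓝 (0 : ℝ))).smul
    (((continuous_evalScalar q).tendsto 0).isBigO_one ℝ)
  simpa [evalScalar_X_pow_mul] using this

noncomputable def strangSplitting (A B : 𝔸) (t : ℝ) : 𝔸 :=
  exp ((t / 2) • B) * exp (t • A) * exp ((t / 2) • B)

theorem strangSplitting_eq_smul_half (A B : 𝔸) (t : ℝ) :
    strangSplitting A B t
      = exp (t • (1 / 2 : ℝ) • B) * exp (t • A) * exp (t • (1 / 2 : ℝ) • B) := by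
  simp only [strangSplitting, smul_smul, mul_one_div]

theorem strangSplitting_div_two (A B : 𝔸) (t : ℝ) :
    strangSplitting A B (t / 2) = strangSplitting ((1 / 2 : ℝ) • A) ((1 / 2 : ℝ) • B) t := by
  simp only [strangSplitting, smul_smul]
  ring_nf

variable [CompleteSpace 𝔸]

theorem continuous_exp_smul (M : 𝔸) : Continuous fun t : ℝ => exp (t • M) :=
  (continuous_iff_continuousAt.2 fun x => (exp_analytic (𝕂 := ℝ) x).continuousAt).comp
    (continuous_id.smul continuous_const)

theorem continuous_strangSplitting (A B : 𝔸) : Continuous (strangSplitting A B) := by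
  simp only [funext (strangSplitting_eq_smul_half A B)]
  exact ((continuous_exp_smul _).mul (continuous_exp_smul _)).mul (continuous_exp_smul _)

theorem exp_smul_sub_evalScalar_expTaylor_isBigO (n : ℕ) (M : 𝔸) :
    (fun t : ℝ => exp (t • M) - evalScalar t (expTaylor n M)) =O[𝓝 0] (· ^ n) := by
  have hM : Tendsto (fun t : ℝ => t • M) (𝓝 0) (𝓝 0) :=
    (continuous_id.smul continuous_const).tendsto' 0 0 (zero_smul ℝ M)
  have h := ((exp_hasFPowerSeriesAt_zero (𝕂 := ℝ)).isBigO_sub_partialSum_pow n).comp_tendsto hM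
  refine (h.congr_left fun t => by simp [evalScalar_expTaylor]).trans ?_
  refine IsBigO.of_bound (‖M‖ ^ n) (Eventually.of_forall fun t => ?_)
  simp [norm_smul, mul_pow, mul_comm]

theorem strangSplitting_sub_evalScalar_strangTaylor_isBigO (n : ℕ) (A B : 𝔸) :
    (fun t : ℝ => strangSplitting A B t - evalScalar t (strangTaylor n A B)) =O[𝓝 0] (· ^ n) := by
  have hB := exp_smul_sub_evalScalar_expTaylor_isBigO n ((1 / 2 : ℝ) • B)
  have hA := exp_smul_sub_evalScalar_expTaylor_isBigO n A
  have hBA := isBigO_mul_sub_mul hB hA ((continuous_exp_smul _).tendsto 0 |>.isBigO_one ℝ)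
    ((continuous_evalScalar _).tendsto 0 |>.isBigO_one ℝ)
  have hBAB := isBigO_mul_sub_mul hBA hB
    (((continuous_exp_smul _).mul (continuous_exp_smul _)).tendsto 0 |>.isBigO_one ℝ)
    ((continuous_evalScalar _).tendsto 0 |>.isBigO_one ℝ)
  exact hBAB.congr_left fun t => by
    rw [strangSplitting_eq_smul_half, strangTaylor, map_mul, map_mul]

theorem mpe4_sub_exp_isBigO (A B : 𝔸) :
    (fun h : ℝ => (-1 / 3 : ℝ) • strangSplitting A B h
      + (4 / 3 : ℝ) • (strangSplitting A B (h / 2) * strangSplitting A B (h / 2))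
      - exp (h • (A + B))) =O[𝓝 0] (· ^ 5) := by
  have hS := strangSplitting_sub_evalScalar_strangTaylor_isBigO 5 A B
  have hS₂ :=
    strangSplitting_sub_evalScalar_strangTaylor_isBigO 5 ((1 / 2 : ℝ) • A) ((1 / 2 : ℝ) • B)
  have hS₂S₂ := isBigO_mul_sub_mul hS₂ hS₂
    ((continuous_strangSplitting _ _).tendsto 0 |>.isBigO_one ℝ)
    ((continuous_evalScalar _).tendsto 0 |>.isBigO_one ℝ)
  have hE := exp_smul_sub_evalScalar_expTaylor_isBigO 5 (A + B)
  have hD := isBigO_evalScalar_of_X_pow_dvd (X_pow_dvd_iff.mpr fun _ => coeff_mpe4TaylorDefect A B)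
  refine ((((hS.const_smul_left (-1 / 3 : ℝ)).add (hS₂S₂.const_smul_left (4 / 3 : ℝ))).sub hE).add
    hD).congr_left fun h => ?_
  simp only [Pi.smul_apply, mpe4TaylorDefect, sq, map_sub, map_add, map_smul, map_mul,
    strangSplitting_div_two]
  module

end Normed

/-- Fourth-order accuracy of the MPE combination -1/3·S(h) + 4/3·S(h/2)²
    of the Strang splitting S(h) = e^{(h/2)B} e^{hA} e^{(h/2)B}:
    it equals e^{h(A+B)} + O(h⁵). -/
theorem mpe4_fourth_order (d : ℕ) (A B : Matrix (Fin d) (Fin d) ℝ) :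
    let S : ℝ → Matrix (Fin d) (Fin d) ℝ :=
      fun h => exp ((h / 2) • B) * exp (h • A) * exp ((h / 2) • B)
    ∃ C ε : ℝ, 0 < C ∧ 0 < ε ∧ ∀ h : ℝ, |h| < ε →
      ‖(-1/3 : ℝ) • S h + (4/3 : ℝ) • (S (h / 2) * S (h / 2))
        - exp (h • (A + B))‖ ≤ C * |h| ^ 5 := by
  intro S
  obtain ⟨c, hc⟩ := (mpe4_sub_exp_isBigO A B).bound
  obtain ⟨ε, hε, hball⟩ := Metric.eventually_nhds_iff.mp hc
  refine ⟨max c 1, ε, by positivity, hε, fun h hh => ?_⟩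
  calc _ ≤ c * ‖h ^ 5‖ := hball (by simpa using hh)
    _ ≤ max c 1 * |h| ^ 5 := by
      rw [norm_pow, Real.norm_eq_abs]
      gcongr
      exact le_max_left _ _
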